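/- (Corollary 5.5) Let Ω be a real n×n matrix, let K = [[0, I_n],[−Ω, 0]] be the 2n×2n block matrix with zero diagonal blocks, I_n in the upper-right block and −Ω in the lower-left block, and let g : ℝ^{2n} → ℝ^{2n} be given by g(q,p) = (0, g̃(q)) for a differentiable map g̃ : ℝ^n → ℝ^n. Let s = 2, c_1 = c_2, and let (A,b) be symplectic with b_1 ≠ 0 and b_2 ≠ 0. Then at every point y ∈ ℝ^{2n} where I_{s·2n} − h·Ā·F(y) is invertible, the special symplectic exponential integrator satisfies det(Dφ_h(y)) = 1; that is, the corresponding two-stage ERKN integrator preserves volume for the separable partitioned system (q,p)' = (p, −Ω·q + g̃(q)). -/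

import Mathlib

/-!
With all nodes equal, every stage sees the same propagator `exp(c h K)`, so
`Dk_i = exp(c h K) + h ∑_j a_ij Dg(k_j) Dk_j`. For `g(q,p) = (0, g̃(q))` every Jacobian of `g`
has the form `[[0,0],[G,0]]`, and any two of them multiply to zero; hence
`Dg(k_i) Dk_i = Dg(k_i) exp(c h K)` and
`Dφ_h = exp((1-c) h K) (I + h ∑_i b_i Dg(k_i)) exp(c h K)`.
The middle factor is block unipotent, and `det exp(tK) = 1` because `K = [[0,I],[-Ω,0]]` is
conjugate to `-K` by `diag(I,-I)`, which forces `det exp(tK) = ±1`, while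
`det exp(tK) = (det exp(tK/2))² ≥ 0`.
-/

open Matrix

/-- The Jacobian matrix of a map `f : ℝ^ι → ℝ^ι` at a point `y`. -/
noncomputable def jac {ι : Type*} [Fintype ι] [DecidableEq ι]
    (f : (ι → ℝ) → (ι → ℝ)) (y : ι → ℝ) : Matrix ι ι ℝ :=
  LinearMap.toMatrix' ((fderiv ℝ f y).toLinearMap)

/-- A Runge–Kutta pair `(A, b)` is symplectic. -/
def IsSymplecticRK {s : ℕ} (A : Matrix (Fin s) (Fin s) ℝ) (b : Fin s → ℝ) : Prop :=
  ∀ i j, b i * A i j + b j * A j i - b i * b j = 0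

namespace Matrix

section

variable {m n : Type*} [Fintype m] [DecidableEq m] [Fintype n] [DecidableEq n]

theorem det_exp_eq_one_of_conj_neg (K S : Matrix m m ℝ) (hS : IsUnit S)
    (hK : S * K * S⁻¹ = -K) : (NormedSpace.exp K).det = 1 := by
  have hunit : IsUnit (NormedSpace.exp K).det := (isUnit_iff_isUnit_det _).mp (isUnit_exp K)
  have hsq : (NormedSpace.exp K).det * (NormedSpace.exp K).det = 1 := by
    have hneg : (NormedSpace.exp (-K)).det = (NormedSpace.exp K).det := by
      rw [← hK, exp_conj S K hS, det_conj hS]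
    nth_rw 2 [← hneg]
    rw [exp_neg, det_nonsing_inv]
    exact Ring.mul_inverse_cancel _ hunit
  have hnonneg : 0 ≤ (NormedSpace.exp K).det := by
    rw [← show (2⁻¹ : ℝ) • K + (2⁻¹ : ℝ) • K = K by rw [← add_smul]; norm_num,
      exp_add_of_commute _ _ (Commute.refl _), det_mul]
    exact mul_self_nonneg _
  nlinarith

theorem det_exp_fromBlocks_zero₁₁_zero₂₂ (B : Matrix m n ℝ) (C : Matrix n m ℝ) :
    (NormedSpace.exp (fromBlocks 0 B C 0)).det = 1 := by
  set S : Matrix (m ⊕ n) (m ⊕ n) ℝ := fromBlocks 1 0 0 (-1)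
  have hSS : S * S = 1 := by simp [S, fromBlocks_multiply, fromBlocks_one]
  refine det_exp_eq_one_of_conj_neg _ S ⟨⟨S, S, hSS, hSS⟩, rfl⟩ ?_
  rw [inv_eq_right_inv hSS]
  simp [S, fromBlocks_multiply, fromBlocks_neg]

theorem fromBlocks_zero_zero_zero_mul {α : Type*} [Semiring α] (C C' : Matrix n m α) :
    fromBlocks (0 : Matrix m m α) 0 C (0 : Matrix n n α) * fromBlocks 0 0 C' 0 = 0 := by
  simp [fromBlocks_multiply]

theorem det_one_add_fromBlocks_zero_zero_zero {α : Type*} [CommRing α] (C : Matrix n m α) :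
    (1 + fromBlocks (0 : Matrix m m α) 0 C (0 : Matrix n n α)).det = 1 := by
  rw [← fromBlocks_one, fromBlocks_add]
  simp only [add_zero, zero_add]
  rw [det_fromBlocks_zero₁₂, det_one, det_one, one_mul]

end

theorem sum_smul_fromBlocks_zero_zero_zero {m n α σ : Type*} [Semiring α] [Fintype σ]
    (b : σ → α) (C : σ → Matrix n m α) :
    ∑ i, b i • fromBlocks (0 : Matrix m m α) 0 (C i) (0 : Matrix n n α) =
      fromBlocks 0 0 (∑ i, b i • C i) 0 := by
  ext (_ | _) (_ | _) <;> simp [Matrix.sum_apply]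

end Matrix

section Jacobian

theorem Matrix.hasFDerivAt_mulVec {ι κ : Type*} [Fintype ι] [Fintype κ] (M : Matrix κ ι ℝ)
    (x : ι → ℝ) :
    HasFDerivAt (M *ᵥ ·) (LinearMap.toContinuousLinearMap M.mulVecLin) x :=
  (LinearMap.toContinuousLinearMap M.mulVecLin).hasFDerivAt

theorem Matrix.toMatrix'_toContinuousLinearMap_mulVecLin {ι κ : Type*} [Fintype ι]
    [DecidableEq ι] (M : Matrix κ ι ℝ) :
    LinearMap.toMatrix' (LinearMap.toContinuousLinearMap M.mulVecLin : (ι → ℝ) →ₗ[ℝ] κ → ℝ) =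
      M := by
  rw [LinearMap.coe_toContinuousLinearMap, ← Matrix.toLin'_apply', LinearMap.toMatrix'_toLin']

theorem hasFDerivAt_mulVec_comp_mulVec {ι κ μ ν : Type*} [Fintype ι] [Fintype κ] [Fintype μ]
    [Fintype ν] (P : Matrix ν μ ℝ) (Q : Matrix κ ι ℝ) {f : (κ → ℝ) → μ → ℝ} {x : ι → ℝ}
    (hf : DifferentiableAt ℝ f (Q *ᵥ x)) :
    HasFDerivAt (fun y => P *ᵥ f (Q *ᵥ y)) (LinearMap.toContinuousLinearMap P.mulVecLin ∘L
      fderiv ℝ f (Q *ᵥ x) ∘L LinearMap.toContinuousLinearMap Q.mulVecLin) x :=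
  (P.hasFDerivAt_mulVec _).comp x (hf.hasFDerivAt.comp x (Q.hasFDerivAt_mulVec x))

variable {ι : Type*} [Fintype ι] [DecidableEq ι]

theorem jac_mulVec_comp_mulVec {κ : Type*} [Fintype κ] [DecidableEq κ] (P : Matrix ι κ ℝ)
    (Q : Matrix κ ι ℝ) (f : (κ → ℝ) → κ → ℝ) (x : ι → ℝ) (hf : DifferentiableAt ℝ f (Q *ᵥ x)) :
    jac (fun y => P *ᵥ f (Q *ᵥ y)) x = P * jac f (Q *ᵥ x) * Q := by
  rw [jac, (hasFDerivAt_mulVec_comp_mulVec P Q hf).fderiv, jac]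
  simp only [ContinuousLinearMap.toLinearMap_comp, LinearMap.toMatrix'_comp,
    Matrix.toMatrix'_toContinuousLinearMap_mulVecLin, Matrix.mul_assoc]

theorem jac_mulVec_add_smul_sum {σ : Type*} [Fintype σ] (M : Matrix ι ι ℝ)
    (N : σ → Matrix ι ι ℝ) (h : ℝ) (g : (ι → ℝ) → ι → ℝ) (k : σ → (ι → ℝ) → ι → ℝ)
    (y : ι → ℝ) (hg : ∀ j, DifferentiableAt ℝ g (k j y))
    (hk : ∀ j, DifferentiableAt ℝ (k j) y) :
    jac (fun y => M *ᵥ y + h • ∑ j, N j *ᵥ g (k j y)) y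
      = M + h • ∑ j, N j * (jac g (k j y) * jac (k j) y) := by
  have hterm (j : σ) : HasFDerivAt (fun y => N j *ᵥ g (k j y)) _ y :=
    ((N j).hasFDerivAt_mulVec _).comp y ((hg j).hasFDerivAt.comp y (hk j).hasFDerivAt)
  have hderiv : HasFDerivAt (fun y => M *ᵥ y + h • ∑ j, N j *ᵥ g (k j y)) _ y :=
    (M.hasFDerivAt_mulVec y).add
      ((HasFDerivAt.fun_sum (u := Finset.univ) fun j _ => hterm j).const_smul h)
  rw [jac, hderiv.fderiv]
  simp only [ContinuousLinearMap.toLinearMap_add, ContinuousLinearMap.toLinearMap_smul,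
    ContinuousLinearMap.toLinearMap_sum, ContinuousLinearMap.toLinearMap_comp, map_add,
    map_smul, map_sum, LinearMap.toMatrix'_comp, Matrix.toMatrix'_toContinuousLinearMap_mulVecLin,
    jac]

theorem sumElim_zero_comp_inl_eq_mulVec (f : (ι → ℝ) → ι → ℝ) :
    (fun y : ι ⊕ ι → ℝ => Sum.elim (0 : ι → ℝ) (f (y ∘ Sum.inl))) =
      fun y => fromRows 0 1 *ᵥ f (fromCols 1 0 *ᵥ y) := by
  ext y (_ | _) <;> simp [fromCols_mulVec, fromRows_mulVec]

theorem differentiable_sumElim_zero_comp_inl {f : (ι → ℝ) → ι → ℝ} (hf : Differentiable ℝ f) :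
    Differentiable ℝ (fun y : ι ⊕ ι → ℝ => Sum.elim (0 : ι → ℝ) (f (y ∘ Sum.inl))) := by
  rw [sumElim_zero_comp_inl_eq_mulVec]
  exact fun x => (hasFDerivAt_mulVec_comp_mulVec _ _ (hf _)).differentiableAt

theorem jac_sumElim_zero_comp_inl (f : (ι → ℝ) → ι → ℝ) (x : ι ⊕ ι → ℝ)
    (hf : DifferentiableAt ℝ f (x ∘ Sum.inl)) :
    jac (fun y => Sum.elim (0 : ι → ℝ) (f (y ∘ Sum.inl))) x =
      fromBlocks 0 0 (jac f (x ∘ Sum.inl)) 0 := by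
  have hinl : x ∘ Sum.inl = fromCols 1 0 *ᵥ x := by simp [fromCols_mulVec]
  rw [hinl] at hf ⊢
  rw [sumElim_zero_comp_inl_eq_mulVec, jac_mulVec_comp_mulVec _ _ _ _ hf, fromRows_mul,
    fromRows_mul_fromCols]
  simp

end Jacobian

section ExponentialIntegrator

variable {ι σ : Type*} [Fintype ι] [DecidableEq ι] [Fintype σ]
  {K : Matrix ι ι ℝ} {h c₀ : ℝ} {c : σ → ℝ} {A : Matrix σ σ ℝ} {b : σ → ℝ}
  {g : (ι → ℝ) → ι → ℝ} {k : σ → (ι → ℝ) → ι → ℝ} {φ : (ι → ℝ) → ι → ℝ}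

theorem jac_stage_eq_of_forall_eq (hc : ∀ i, c i = c₀) (hg : Differentiable ℝ g)
    (hk : ∀ i, Differentiable ℝ (k i))
    (hkdef : ∀ i y, k i y = NormedSpace.exp ((c i * h) • K) *ᵥ y +
      h • ∑ j, (A i j • NormedSpace.exp (((c i - c j) * h) • K)) *ᵥ g (k j y))
    (i : σ) (y : ι → ℝ) :
    jac (k i) y = NormedSpace.exp ((c₀ * h) • K) +
      h • ∑ j, A i j • (jac g (k j y) * jac (k j) y) := by
  simp only [hc, sub_self, zero_mul, zero_smul, NormedSpace.exp_zero] at hkdef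
  rw [funext (hkdef i), jac_mulVec_add_smul_sum _ _ _ _ _ _ (fun j => hg _) (fun j => hk j y)]
  simp only [smul_mul_assoc, one_mul]

theorem jac_mul_jac_stage_of_forall_eq (hc : ∀ i, c i = c₀) (hg : Differentiable ℝ g)
    (hD : ∀ x x', jac g x * jac g x' = 0) (hk : ∀ i, Differentiable ℝ (k i))
    (hkdef : ∀ i y, k i y = NormedSpace.exp ((c i * h) • K) *ᵥ y +
      h • ∑ j, (A i j • NormedSpace.exp (((c i - c j) * h) • K)) *ᵥ g (k j y))
    (i : σ) (y : ι → ℝ) :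
    jac g (k i y) * jac (k i) y = jac g (k i y) * NormedSpace.exp ((c₀ * h) • K) := by
  rw [jac_stage_eq_of_forall_eq hc hg hk hkdef, Matrix.mul_add, Matrix.mul_smul, Finset.mul_sum]
  simp only [Matrix.mul_smul, ← Matrix.mul_assoc, hD, Matrix.zero_mul, smul_zero,
    Finset.sum_const_zero, add_zero]

theorem jac_update_eq_of_forall_eq (hc : ∀ i, c i = c₀) (hg : Differentiable ℝ g)
    (hD : ∀ x x', jac g x * jac g x' = 0) (hk : ∀ i, Differentiable ℝ (k i))
    (hkdef : ∀ i y, k i y = NormedSpace.exp ((c i * h) • K) *ᵥ y +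
      h • ∑ j, (A i j • NormedSpace.exp (((c i - c j) * h) • K)) *ᵥ g (k j y))
    (hφ : ∀ y, φ y = NormedSpace.exp (h • K) *ᵥ y +
      h • ∑ i, (b i • NormedSpace.exp (((1 - c i) * h) • K)) *ᵥ g (k i y))
    (y : ι → ℝ) :
    jac φ y = NormedSpace.exp (((1 - c₀) * h) • K) * (1 + h • ∑ i, b i • jac g (k i y)) *
      NormedSpace.exp ((c₀ * h) • K) := by
  have hsplit : NormedSpace.exp (h • K) =
      NormedSpace.exp (((1 - c₀) * h) • K) * NormedSpace.exp ((c₀ * h) • K) := by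
    rw [← exp_add_of_commute _ _ ((Commute.refl K).smul_left _ |>.smul_right _), ← add_smul]
    ring_nf
  rw [funext hφ, jac_mulVec_add_smul_sum _ _ _ _ _ _ (fun j => hg _) (fun j => hk j y)]
  simp only [hc, jac_mul_jac_stage_of_forall_eq hc hg hD hk hkdef, hsplit, Matrix.mul_add,
    Matrix.add_mul, Matrix.mul_one, Matrix.mul_smul, Matrix.smul_mul, Finset.mul_sum,
    Finset.sum_mul, Matrix.mul_assoc]

end ExponentialIntegrator

theorem stmt_16 (n : ℕ) (h : ℝ) (Ω : Matrix (Fin n) (Fin n) ℝ)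
    (K : Matrix (Fin n ⊕ Fin n) (Fin n ⊕ Fin n) ℝ)
    (hK : K = fromBlocks 0 1 (-Ω) 0)
    (gt : (Fin n → ℝ) → (Fin n → ℝ)) (hgt : Differentiable ℝ gt)
    (g : ((Fin n ⊕ Fin n) → ℝ) → ((Fin n ⊕ Fin n) → ℝ))
    (hg : ∀ y, g y = Sum.elim (0 : Fin n → ℝ) (gt (y ∘ Sum.inl)))
    (c : Fin 2 → ℝ) (hc : c 0 = c 1)
    (A : Matrix (Fin 2) (Fin 2) ℝ) (b : Fin 2 → ℝ)
    (k : Fin 2 → ((Fin n ⊕ Fin n) → ℝ) → ((Fin n ⊕ Fin n) → ℝ))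
    (hk : ∀ i, Differentiable ℝ (k i))
    (hkdef : ∀ i y, k i y =
      (NormedSpace.exp ((c i * h) • K)).mulVec y +
        h • ∑ j, (A i j • NormedSpace.exp (((c i - c j) * h) • K)).mulVec (g (k j y)))
    (φ : ((Fin n ⊕ Fin n) → ℝ) → ((Fin n ⊕ Fin n) → ℝ))
    (hφ : ∀ y, φ y =
      (NormedSpace.exp (h • K)).mulVec y +
        h • ∑ i, (b i • NormedSpace.exp (((1 - c i) * h) • K)).mulVec (g (k i y)))
    (F : (((Fin n ⊕ Fin n)) → ℝ) →
      Matrix (Fin 2 × (Fin n ⊕ Fin n)) (Fin 2 × (Fin n ⊕ Fin n)) ℝ)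
    (Ablk : Matrix (Fin 2 × (Fin n ⊕ Fin n)) (Fin 2 × (Fin n ⊕ Fin n)) ℝ) :
    ∀ y : (Fin n ⊕ Fin n) → ℝ,
      IsUnit ((1 : Matrix (Fin 2 × (Fin n ⊕ Fin n)) (Fin 2 × (Fin n ⊕ Fin n)) ℝ) -
        h • (Ablk * F y)) →
      (jac φ y).det = 1 := by
  intro y _
  have hc_const : ∀ i, c i = c 0 := fun i => by fin_cases i <;> simp [hc]
  rw [← funext_iff] at hg
  have hjac x : jac g x = fromBlocks 0 0 (jac gt (x ∘ Sum.inl)) 0 :=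
    hg ▸ jac_sumElim_zero_comp_inl gt x (hgt _)
  have hjac_mul x x' : jac g x * jac g x' = 0 := by
    rw [hjac, hjac, fromBlocks_zero_zero_zero_mul]
  have hdet_exp (t : ℝ) : (NormedSpace.exp (t • K)).det = 1 := by
    rw [hK, fromBlocks_smul, smul_zero, det_exp_fromBlocks_zero₁₁_zero₂₂]
  have hdet_mid : (1 + h • ∑ i, b i • jac g (k i y)).det = 1 := by
    simp only [hjac]
    rw [sum_smul_fromBlocks_zero_zero_zero, fromBlocks_smul, smul_zero,
      det_one_add_fromBlocks_zero_zero_zero]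
  rw [jac_update_eq_of_forall_eq hc_const (hg ▸ differentiable_sumElim_zero_comp_inl hgt)
    hjac_mul hk hkdef hφ, det_mul, det_mul, hdet_exp, hdet_exp, hdet_mid, mul_one, mul_one]
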